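/- Let A, B be n×n positive semidefinite complex matrices and let t ∈ (1/2, 1). Then ‖A^t B^(1-t) + B^t A^(1-t)‖_F ≤ ‖A + B‖_F^(1/2) · ‖B^(1-t) A^(2t-1) B^(1-t) + A^(1-t) B^(2t-1) A^(1-t)‖_F^(1/2), where ‖·‖_F is the Frobenius norm. -/

import Mathlib

/-!
Factor the left-hand matrix as `C * D` with the block row `C = [A^(1/2)  B^(1/2)]` and the block
column `D = [A^(t-1/2) B^(1-t) ; B^(t-1/2) A^(1-t)]`. Then `C Cᴴ = A + B` and `Dᴴ D` is the matrix
on the right, while Cauchy–Schwarz for the trace pairing gives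
`‖C D‖² = re tr ((Cᴴ C) (D Dᴴ)) ≤ ‖Cᴴ C‖ ‖D Dᴴ‖ = ‖C Cᴴ‖ ‖Dᴴ D‖`.
-/

open scoped ComplexOrder

/-- The real power `A ^ r` of a (positive semidefinite) matrix, defined via the
continuous functional calculus (equivalently, via the spectral decomposition). -/
noncomputable def matRpow {n : ℕ} (A : Matrix (Fin n) (Fin n) ℂ) (r : ℝ) :
    Matrix (Fin n) (Fin n) ℂ :=
  cfc (fun x : ℝ => x ^ r) A

/-- The Frobenius (Hilbert–Schmidt) norm `‖M‖_F = (∑_{i,j} |M_{ij}|²)^{1/2}`. -/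
noncomputable def frobeniusNorm' {n : ℕ} (M : Matrix (Fin n) (Fin n) ℂ) : ℝ :=
  Real.sqrt (∑ i, ∑ j, ‖M i j‖ ^ 2)

namespace Matrix

open scoped Norms.Frobenius

variable {𝕜 : Type*} [RCLike 𝕜] {l m n : Type*} [Fintype l] [Fintype m] [Fintype n]

-- Mathlib's Frobenius norm is the norm of the nested `PiLp 2` space, whose inner product is the
-- trace pairing.
theorem inner_toLp_conjTranspose_toLp (A : Matrix m n 𝕜) (B : Matrix n m 𝕜) :
    inner 𝕜 (WithLp.toLp 2 fun i => WithLp.toLp 2 (Aᴴ i))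
      (WithLp.toLp 2 fun i => WithLp.toLp 2 (B i)) = trace (A * B) := by
  simp only [PiLp.inner_apply, RCLike.inner_apply, conjTranspose_apply, RCLike.star_def,
    RCLike.conj_conj, trace, diag_apply, mul_apply]
  rw [Finset.sum_comm]
  simp_rw [mul_comm]

theorem frobenius_norm_sq_eq_re_trace (A : Matrix m n 𝕜) :
    ‖A‖ ^ 2 = RCLike.re (trace (Aᴴ * A)) := by
  rw [← inner_toLp_conjTranspose_toLp, conjTranspose_conjTranspose]
  exact norm_sq_eq_re_inner (𝕜 := 𝕜) (WithLp.toLp 2 fun i => WithLp.toLp 2 (A i))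

theorem re_trace_mul_le_frobenius_norm_mul (A : Matrix m n 𝕜) (B : Matrix n m 𝕜) :
    RCLike.re (trace (A * B)) ≤ ‖A‖ * ‖B‖ := by
  rw [← inner_toLp_conjTranspose_toLp, ← frobenius_norm_conjTranspose A]
  exact re_inner_le_norm _ _

theorem frobenius_norm_conjTranspose_mul_self (A : Matrix m n 𝕜) :
    ‖Aᴴ * A‖ = ‖A * Aᴴ‖ := by
  refine (pow_left_inj₀ (norm_nonneg _) (norm_nonneg _) two_ne_zero).mp ?_
  simp only [frobenius_norm_sq_eq_re_trace, conjTranspose_mul, conjTranspose_conjTranspose,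
    Matrix.mul_assoc]
  rw [trace_mul_comm]
  simp only [Matrix.mul_assoc]

theorem frobenius_norm_mul_sq_le (C : Matrix l m 𝕜) (D : Matrix m n 𝕜) :
    ‖C * D‖ ^ 2 ≤ ‖C * Cᴴ‖ * ‖Dᴴ * D‖ :=
  calc ‖C * D‖ ^ 2 = RCLike.re (trace ((Cᴴ * C) * (D * Dᴴ))) := by
        rw [frobenius_norm_sq_eq_re_trace, conjTranspose_mul, Matrix.mul_assoc, trace_mul_comm]
        simp only [Matrix.mul_assoc]
    _ ≤ ‖Cᴴ * C‖ * ‖D * Dᴴ‖ := re_trace_mul_le_frobenius_norm_mul _ _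
    _ = ‖C * Cᴴ‖ * ‖Dᴴ * D‖ := by
        have hD := frobenius_norm_conjTranspose_mul_self Dᴴ
        rw [conjTranspose_conjTranspose] at hD
        rw [frobenius_norm_conjTranspose_mul_self C, hD]

theorem frobenius_norm_mul_le_rpow_mul_rpow (C : Matrix l m 𝕜) (D : Matrix m n 𝕜) :
    ‖C * D‖ ≤ ‖C * Cᴴ‖ ^ (1 / 2 : ℝ) * ‖Dᴴ * D‖ ^ (1 / 2 : ℝ) := by
  rw [← Real.sqrt_eq_rpow, ← Real.sqrt_eq_rpow, ← Real.sqrt_mul (norm_nonneg _)]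
  exact Real.le_sqrt_of_sq_le (frobenius_norm_mul_sq_le C D)

end Matrix

open Matrix
open scoped Matrix.Norms.Frobenius

theorem frobeniusNorm'_eq_frobenius_norm {n : ℕ} (M : Matrix (Fin n) (Fin n) ℂ) :
    frobeniusNorm' M = ‖M‖ := by
  rw [frobenius_norm_def, frobeniusNorm', Real.sqrt_eq_rpow]
  simp only [Real.rpow_two]

section MatRpow

variable {n : ℕ} {A : Matrix (Fin n) (Fin n) ℂ}

theorem conjTranspose_matRpow (A : Matrix (Fin n) (Fin n) ℂ) (r : ℝ) :
    (matRpow A r)ᴴ = matRpow A r :=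
  (cfc_predicate _ A : IsSelfAdjoint (matRpow A r)).star_eq

theorem matRpow_one (hA : A.PosSemidef) : matRpow A 1 = A := by
  simp only [matRpow, Real.rpow_one]
  exact cfc_id' ℝ A hA.1.isSelfAdjoint

theorem matRpow_mul_matRpow_of_add_eq (hA : A.PosSemidef) {r s u : ℝ} (hr : 0 ≤ r) (hs : 0 ≤ s)
    (h : r + s = u) : matRpow A r * matRpow A s = matRpow A u := by
  subst h
  rw [matRpow, matRpow, matRpow, ← cfc_mul _ _ A (Real.continuous_rpow_const hr).continuousOn
    (Real.continuous_rpow_const hs).continuousOn]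
  refine cfc_congr fun x hx => (Real.rpow_add_of_nonneg ?_ hr hs).symm
  rw [hA.1.spectrum_real_eq_range_eigenvalues] at hx
  obtain ⟨i, rfl⟩ := hx
  exact hA.eigenvalues_nonneg i

end MatRpow

/-- **Bridge inequality, Frobenius-norm case.** For `n×n` positive semidefinite
complex matrices `A, B` and `t ∈ (1/2, 1)`,
`‖A^t B^(1-t) + B^t A^(1-t)‖_F ≤ ‖A+B‖_F^(1/2) * ‖B^(1-t) A^(2t-1) B^(1-t) + A^(1-t) B^(2t-1) A^(1-t)‖_F^(1/2)`. -/
theorem bridge_inequality_frobenius {n : ℕ} (A B : Matrix (Fin n) (Fin n) ℂ)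
    (hA : A.PosSemidef) (hB : B.PosSemidef) (t : ℝ)
    (ht : t ∈ Set.Ioo (1 / 2 : ℝ) 1) :
    frobeniusNorm' (matRpow A t * matRpow B (1 - t) + matRpow B t * matRpow A (1 - t)) ≤
      frobeniusNorm' (A + B) ^ (1 / 2 : ℝ) *
        frobeniusNorm' (matRpow B (1 - t) * matRpow A (2 * t - 1) * matRpow B (1 - t) +
          matRpow A (1 - t) * matRpow B (2 * t - 1) * matRpow A (1 - t)) ^ (1 / 2 : ℝ) := by
  have h₀ : (0 : ℝ) ≤ 1 / 2 := by norm_num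
  have h₁ : 0 ≤ t - 1 / 2 := by linarith [ht.1]
  set C := fromCols (matRpow A (1 / 2)) (matRpow B (1 / 2))
  set D := fromRows (matRpow A (t - 1 / 2) * matRpow B (1 - t))
    (matRpow B (t - 1 / 2) * matRpow A (1 - t))
  have hCD : C * D = matRpow A t * matRpow B (1 - t) + matRpow B t * matRpow A (1 - t) := by
    simp only [C, D, fromCols_mul_fromRows, ← Matrix.mul_assoc,
      matRpow_mul_matRpow_of_add_eq hA h₀ h₁ (by ring),
      matRpow_mul_matRpow_of_add_eq hB h₀ h₁ (by ring)]
  have hCC : C * Cᴴ = A + B := by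
    simp only [C, conjTranspose_fromCols_eq_fromRows_conjTranspose, fromCols_mul_fromRows,
      conjTranspose_matRpow, matRpow_mul_matRpow_of_add_eq hA h₀ h₀ (add_halves 1),
      matRpow_mul_matRpow_of_add_eq hB h₀ h₀ (add_halves 1), matRpow_one hA, matRpow_one hB]
  have hDD : Dᴴ * D = matRpow B (1 - t) * matRpow A (2 * t - 1) * matRpow B (1 - t) +
      matRpow A (1 - t) * matRpow B (2 * t - 1) * matRpow A (1 - t) := by
    simp only [D, conjTranspose_fromRows_eq_fromCols_conjTranspose, fromCols_mul_fromRows,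
      conjTranspose_mul, conjTranspose_matRpow, Matrix.mul_assoc]
    simp only [← Matrix.mul_assoc (matRpow A (t - 1 / 2)),
      ← Matrix.mul_assoc (matRpow B (t - 1 / 2)),
      matRpow_mul_matRpow_of_add_eq hA h₁ h₁ (by ring : t - 1 / 2 + (t - 1 / 2) = 2 * t - 1),
      matRpow_mul_matRpow_of_add_eq hB h₁ h₁ (by ring : t - 1 / 2 + (t - 1 / 2) = 2 * t - 1)]
  simp only [frobeniusNorm'_eq_frobenius_norm, ← hCD, ← hCC, ← hDD]
  exact frobenius_norm_mul_le_rpow_mul_rpow C D
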